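/- Let S_{V,1} be the linear span of S_V and φ₁ in ℂ² ⊗ ℂ² ⊗ ℂ². Then the set of one-dimensional subspaces of S_{V,1} spanned by product vectors has exactly 6 elements, namely those spanned by: φ₁ = |0⟩ ⊗ |1⟩ ⊗ |+⟩; |−⟩ ⊗ |+⟩ ⊗ |1⟩; |−⟩ ⊗ |−⟩ ⊗ |+⟩; |0⟩ ⊗ |+⟩ ⊗ |0⟩; |+⟩ ⊗ |1⟩ ⊗ |1⟩; and |+⟩ ⊗ |−⟩ ⊗ |0⟩. In particular, every product vector in S_{V,1} is a scalar multiple of one of these six vectors. -/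

import Mathlib

noncomputable section

abbrev Q : Type := EuclideanSpace ℂ (Fin 2)
abbrev Q2 : Type := EuclideanSpace ℂ (Fin 2 × Fin 2)
abbrev Q3 : Type := EuclideanSpace ℂ (Fin 2 × Fin 2 × Fin 2)

/-- standard basis vector of ℂ² -/
def ket2 (i : Fin 2) : Q := EuclideanSpace.single i 1

/-- the state |+⟩ -/
def plus : Q := (Real.sqrt 2 : ℂ)⁻¹ • (ket2 0 + ket2 1)

/-- the state |−⟩ -/
def minus : Q := (Real.sqrt 2 : ℂ)⁻¹ • (ket2 0 - ket2 1)

/-- elementary tensor of three qubit vectors, in ℂ² ⊗ ℂ² ⊗ ℂ² ≅ ℂ⁸ -/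
def tp3 (u v w : Q) : Q3 := WithLp.toLp 2 (fun p => u p.1 * v p.2.1 * w p.2.2)

/-- a product vector in ℂ² ⊗ ℂ² ⊗ ℂ² -/
def IsProd3 (ξ : Q3) : Prop := ∃ u v w : Q, ξ = tp3 u v w

/-- the set of one-dimensional subspaces of `T` spanned by (nonzero) product vectors -/
def prodLines3 (T : Submodule ℂ Q3) : Set (Submodule ℂ Q3) :=
  {L | ∃ ξ : Q3, ξ ≠ 0 ∧ ξ ∈ T ∧ IsProd3 ξ ∧ L = Submodule.span ℂ {ξ}}

/-- a factorized vector across the bipartite cut {1} | {2,3} -/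
def cut1 (u : Q) (η : Q2) : Q3 := WithLp.toLp 2 (fun p => u p.1 * η p.2)

/-- a factorized vector across the bipartite cut {2} | {1,3} -/
def cut2 (u : Q) (η : Q2) : Q3 := WithLp.toLp 2 (fun p => u p.2.1 * η (p.1, p.2.2))

/-- a factorized vector across the bipartite cut {3} | {1,2} -/
def cut3 (u : Q) (η : Q2) : Q3 := WithLp.toLp 2 (fun p => u p.2.2 * η (p.1, p.2.1))

def φ₁ : Q3 := tp3 (ket2 0) (ket2 1) plus
def φ₂ : Q3 := tp3 (ket2 1) plus (ket2 0)
def φ₃ : Q3 := tp3 plus (ket2 0) (ket2 1)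
def φ₄ : Q3 := tp3 minus minus minus

/-- the span of the three-qubit UPB of Bennett et al. -/
def V3 : Submodule ℂ Q3 := Submodule.span ℂ {φ₁, φ₂, φ₃, φ₄}

/-- the orthogonal complement of the span of the three-qubit UPB -/
def SV : Submodule ℂ Q3 := V3ᗮ

/-- the perturbation of `S_V` by `φ₁` -/
def SV1 : Submodule ℂ Q3 := SV ⊔ Submodule.span ℂ {φ₁}


/-!
Since `φ₁` is orthogonal to `φ₂, φ₃, φ₄`, the space `S_{V,1}` is the orthogonal complement of
`span {φ₂, φ₃, φ₄}`. As `⟪a ⊗ b ⊗ c, u ⊗ v ⊗ w⟫ = ⟪a, u⟫ ⟪b, v⟫ ⟪c, w⟫`, a product vector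
`u ⊗ v ⊗ w` lies in it iff for each of `φ₂, φ₃, φ₄` some factor of `u ⊗ v ⊗ w` is orthogonal to
the matching factor of that `φᵢ`. In `ℂ²` such a factor is then confined to a line, one of those
of `|0⟩, |1⟩, |+⟩, |−⟩`, which are pairwise distinct; so the three conditions are met by three
different factors, and the six ways to match conditions with factors give the six lines.
-/

open Submodule
open scoped InnerProductSpace

section InnerProductSpace

variable {𝕜 E : Type*} [RCLike 𝕜] [NormedAddCommGroup E] [InnerProductSpace 𝕜 E]

theorem Submodule.orthogonal_sup_span_singleton_eq {K : Submodule 𝕜 E} {x : E} (hx : x ∈ Kᗮ) :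
    (𝕜 ∙ x ⊔ K)ᗮ ⊔ 𝕜 ∙ x = Kᗮ := by
  have : CompleteSpace (𝕜 ∙ x) := FiniteDimensional.complete 𝕜 _
  rw [← inf_orthogonal, sup_comm]
  exact sup_orthogonal_inf_of_hasOrthogonalProjection ((span_singleton_le_iff_mem _ _).mpr hx)

theorem span_singleton_ne_of_inner_eq_zero {a x y : E} (hx : ⟪a, x⟫_𝕜 ≠ 0) (hy : ⟪a, y⟫_𝕜 = 0) :
    𝕜 ∙ x ≠ 𝕜 ∙ y := by
  intro h
  obtain ⟨c, rfl⟩ := mem_span_singleton.mp (h ▸ mem_span_singleton_self x)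
  exact hx (by rw [inner_smul_right, hy, mul_zero])

theorem span_singleton_eq_of_inner_eq_zero [Fact (Module.finrank 𝕜 E = 2)] {a b t : E}
    (ha : a ≠ 0) (hb : b ≠ 0) (ht : t ≠ 0) (hab : ⟪a, b⟫_𝕜 = 0) (hat : ⟪a, t⟫_𝕜 = 0) :
    𝕜 ∙ t = 𝕜 ∙ b :=
  le_antisymm
    ((span_singleton_le_iff_mem _ _).mpr
      (mem_span_singleton_of_inner_eq_zero_of_inner_eq_zero ha hb hat hab))
    ((span_singleton_le_iff_mem _ _).mpr
      (mem_span_singleton_of_inner_eq_zero_of_inner_eq_zero ha ht hab hat))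

end InnerProductSpace

theorem EuclideanSpace.span_singleton_ne_of_apply {𝕜 ι : Type*} [RCLike 𝕜]
    {x y : EuclideanSpace 𝕜 ι} (h : ∃ i, ¬(x i = 0 ↔ y i = 0)) : 𝕜 ∙ x ≠ 𝕜 ∙ y := by
  obtain ⟨i, hi⟩ := h
  intro he
  obtain ⟨z, rfl⟩ := span_singleton_eq_span_singleton.mp he
  exact hi (by simp [Units.smul_def, z.ne_zero])

theorem eq_of_three_disjunctions {α : Type*} {p q r s x y z : α} (h : [p, q, r, s].Nodup)
    (hA : x = p ∨ y = s ∨ z = q) (hB : x = s ∨ y = q ∨ z = p) (hC : x = r ∨ y = r ∨ z = r) :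
    (x = p ∧ y = q ∧ z = r) ∨ (x = s ∧ y = r ∧ z = q) ∨ (x = s ∧ y = s ∧ z = r) ∨
      (x = p ∧ y = r ∧ z = p) ∨ (x = r ∧ y = q ∧ z = q) ∨ (x = r ∧ y = s ∧ z = p) := by
  simp only [List.nodup_cons, List.mem_cons, List.not_mem_nil, List.nodup_nil] at h
  grind

instance : Fact (Module.finrank ℂ Q = 2) := ⟨finrank_euclideanSpace_fin⟩

theorem ket2_apply (i j : Fin 2) : ket2 i j = if j = i then 1 else 0 := PiLp.single_apply ..

@[simp] theorem plus_apply (j : Fin 2) : plus j = (Real.sqrt 2 : ℂ)⁻¹ := by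
  fin_cases j <;> simp [plus, ket2_apply]

@[simp] theorem minus_apply_zero : minus 0 = (Real.sqrt 2 : ℂ)⁻¹ := by simp [minus, ket2_apply]

@[simp] theorem minus_apply_one : minus 1 = -(Real.sqrt 2 : ℂ)⁻¹ := by simp [minus, ket2_apply]

theorem ket2_ne_zero (i : Fin 2) : ket2 i ≠ 0 := by simp [ket2]

theorem plus_ne_zero : plus ≠ 0 := fun h => by simpa using congr($h 0)

theorem minus_ne_zero : minus ≠ 0 := fun h => by simpa using congr($h 0)

@[simp] theorem inner_ket2 (i : Fin 2) (u : Q) : ⟪ket2 i, u⟫_ℂ = u i := by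
  simp [ket2, EuclideanSpace.inner_single_left]

theorem inner_ket2_zero_one : ⟪ket2 0, ket2 1⟫_ℂ = 0 := by simp [ket2_apply]

theorem inner_ket2_one_zero : ⟪ket2 1, ket2 0⟫_ℂ = 0 := by simp [ket2_apply]

@[simp] theorem inner_minus_plus : ⟪minus, plus⟫_ℂ = 0 := by
  simp [PiLp.inner_apply, Fin.sum_univ_two]

@[simp] theorem inner_plus_minus : ⟪plus, minus⟫_ℂ = 0 := inner_eq_zero_symm.mp inner_minus_plus

theorem span_qubit_lines_nodup : [ℂ ∙ ket2 0, ℂ ∙ ket2 1, ℂ ∙ plus, ℂ ∙ minus].Nodup := by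
  have hpm : ℂ ∙ plus ≠ ℂ ∙ minus :=
    span_singleton_ne_of_inner_eq_zero (inner_self_ne_zero.mpr plus_ne_zero) inner_plus_minus
  simp [hpm, EuclideanSpace.span_singleton_ne_of_apply, Fin.exists_fin_two, ket2_apply]

@[simp] theorem tp3_apply (u v w : Q) (p : Fin 2 × Fin 2 × Fin 2) :
    tp3 u v w p = u p.1 * v p.2.1 * w p.2.2 := rfl

theorem inner_tp3 (a b c u v w : Q) :
    ⟪tp3 a b c, tp3 u v w⟫_ℂ = ⟪a, u⟫_ℂ * ⟪b, v⟫_ℂ * ⟪c, w⟫_ℂ := by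
  simp only [PiLp.inner_apply, tp3_apply, Fintype.sum_prod_type, Fin.sum_univ_two,
    RCLike.inner_apply, map_mul]
  ring

theorem tp3_eq_zero_iff {u v w : Q} : tp3 u v w = 0 ↔ u = 0 ∨ v = 0 ∨ w = 0 := by
  rw [← inner_self_eq_zero (𝕜 := ℂ), inner_tp3]
  simp only [mul_eq_zero, inner_self_eq_zero, or_assoc]

theorem tp3_smul (α β γ : ℂ) (u v w : Q) :
    tp3 (α • u) (β • v) (γ • w) = (α * β * γ) • tp3 u v w := by
  ext p
  simp only [tp3_apply, PiLp.smul_apply, smul_eq_mul]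
  ring

theorem span_tp3_congr {u v w a b c : Q} (hu : ℂ ∙ u = ℂ ∙ a) (hv : ℂ ∙ v = ℂ ∙ b)
    (hw : ℂ ∙ w = ℂ ∙ c) : ℂ ∙ tp3 u v w = ℂ ∙ tp3 a b c := by
  rw [span_singleton_eq_span_singleton] at *
  obtain ⟨α, rfl⟩ := hu
  obtain ⟨β, rfl⟩ := hv
  obtain ⟨γ, rfl⟩ := hw
  exact ⟨α * β * γ, by simp [Units.smul_def, tp3_smul]⟩

theorem span_tp3_mem_prodLines3 {T : Submodule ℂ Q3} {u v w : Q} (hu : u ≠ 0) (hv : v ≠ 0)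
    (hw : w ≠ 0) (h : tp3 u v w ∈ T) : ℂ ∙ tp3 u v w ∈ prodLines3 T :=
  ⟨_, by simp [tp3_eq_zero_iff, hu, hv, hw], h, ⟨u, v, w, rfl⟩, rfl⟩

theorem mem_SV1_iff (ξ : Q3) : ξ ∈ SV1 ↔ ⟪φ₂, ξ⟫_ℂ = 0 ∧ ⟪φ₃, ξ⟫_ℂ = 0 ∧ ⟪φ₄, ξ⟫_ℂ = 0 := by
  have hW (η : Q3) : η ∈ (ℂ ∙ φ₂ ⊔ (ℂ ∙ φ₃ ⊔ ℂ ∙ φ₄))ᗮ ↔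
      ⟪φ₂, η⟫_ℂ = 0 ∧ ⟪φ₃, η⟫_ℂ = 0 ∧ ⟪φ₄, η⟫_ℂ = 0 := by
    simp only [← inf_orthogonal, mem_inf, mem_orthogonal_singleton_iff_inner_right]
  have hφ₁ : φ₁ ∈ (ℂ ∙ φ₂ ⊔ (ℂ ∙ φ₃ ⊔ ℂ ∙ φ₄))ᗮ := by
    rw [hW]
    simp [φ₁, φ₂, φ₃, φ₄, inner_tp3, ket2_apply]
  rw [SV1, SV, V3, span_insert, span_insert, span_insert, orthogonal_sup_span_singleton_eq hφ₁, hW]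

theorem tp3_mem_SV1_iff {u v w : Q} : tp3 u v w ∈ SV1 ↔
    (⟪ket2 1, u⟫_ℂ = 0 ∨ ⟪plus, v⟫_ℂ = 0 ∨ ⟪ket2 0, w⟫_ℂ = 0) ∧
    (⟪plus, u⟫_ℂ = 0 ∨ ⟪ket2 0, v⟫_ℂ = 0 ∨ ⟪ket2 1, w⟫_ℂ = 0) ∧
    (⟪minus, u⟫_ℂ = 0 ∨ ⟪minus, v⟫_ℂ = 0 ∨ ⟪minus, w⟫_ℂ = 0) := by
  simp only [mem_SV1_iff, φ₂, φ₃, φ₄, inner_tp3, mul_eq_zero, or_assoc]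

def sixProductLines : Set (Submodule ℂ Q3) :=
  {ℂ ∙ φ₁, ℂ ∙ tp3 minus plus (ket2 1), ℂ ∙ tp3 minus minus plus, ℂ ∙ tp3 (ket2 0) plus (ket2 0),
    ℂ ∙ tp3 plus (ket2 1) (ket2 1), ℂ ∙ tp3 plus minus (ket2 0)}

theorem span_tp3_mem_sixProductLines {u v w : Q} (hξ : tp3 u v w ≠ 0) (h : tp3 u v w ∈ SV1) :
    ℂ ∙ tp3 u v w ∈ sixProductLines := by
  obtain ⟨hu, hv, hw⟩ : u ≠ 0 ∧ v ≠ 0 ∧ w ≠ 0 := by simpa [tp3_eq_zero_iff, not_or] using hξ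
  have line₀ {t : Q} (ht : t ≠ 0) := span_singleton_eq_of_inner_eq_zero
    (ket2_ne_zero 1) (ket2_ne_zero 0) ht inner_ket2_one_zero
  have line₁ {t : Q} (ht : t ≠ 0) := span_singleton_eq_of_inner_eq_zero
    (ket2_ne_zero 0) (ket2_ne_zero 1) ht inner_ket2_zero_one
  have linePlus {t : Q} (ht : t ≠ 0) := span_singleton_eq_of_inner_eq_zero
    minus_ne_zero plus_ne_zero ht inner_minus_plus
  have lineMinus {t : Q} (ht : t ≠ 0) := span_singleton_eq_of_inner_eq_zero
    plus_ne_zero minus_ne_zero ht inner_plus_minus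
  obtain ⟨hA, hB, hC⟩ := tp3_mem_SV1_iff.mp h
  rcases eq_of_three_disjunctions span_qubit_lines_nodup
      (hA.imp (line₀ hu) (Or.imp (lineMinus hv) (line₁ hw)))
      (hB.imp (lineMinus hu) (Or.imp (line₁ hv) (line₀ hw)))
      (hC.imp (linePlus hu) (Or.imp (linePlus hv) (linePlus hw))) with
    ⟨hx, hy, hz⟩ | ⟨hx, hy, hz⟩ | ⟨hx, hy, hz⟩ | ⟨hx, hy, hz⟩ | ⟨hx, hy, hz⟩ | ⟨hx, hy, hz⟩ <;>
  · rw [span_tp3_congr hx hy hz]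
    simp [sixProductLines, φ₁]

theorem prodLines3_SV1 : prodLines3 SV1 = sixProductLines := by
  apply Set.Subset.antisymm
  · rintro _ ⟨_, hξ, h, ⟨u, v, w, rfl⟩, rfl⟩
    exact span_tp3_mem_sixProductLines hξ h
  · simp only [sixProductLines, Set.insert_subset_iff, Set.singleton_subset_iff, φ₁]
    refine ⟨?_, ?_, ?_, ?_, ?_, ?_⟩ <;> apply span_tp3_mem_prodLines3 <;>
      simp [tp3_mem_SV1_iff, ket2_apply, ket2_ne_zero, plus_ne_zero, minus_ne_zero]

theorem ncard_sixProductLines : sixProductLines.ncard = 6 := by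
  rw [sixProductLines, Set.ncard_insert_of_notMem, Set.ncard_insert_of_notMem,
    Set.ncard_insert_of_notMem, Set.ncard_insert_of_notMem, Set.ncard_pair]
  all_goals simp [φ₁, EuclideanSpace.span_singleton_ne_of_apply, Prod.exists, Fin.exists_fin_two,
    ket2_apply]

theorem statement9 :
    prodLines3 SV1 =
      {Submodule.span ℂ {φ₁},
       Submodule.span ℂ {tp3 minus plus (ket2 1)},
       Submodule.span ℂ {tp3 minus minus plus},
       Submodule.span ℂ {tp3 (ket2 0) plus (ket2 0)},
       Submodule.span ℂ {tp3 plus (ket2 1) (ket2 1)},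
       Submodule.span ℂ {tp3 plus minus (ket2 0)}} ∧
    (prodLines3 SV1).ncard = 6 :=
  ⟨prodLines3_SV1, prodLines3_SV1 ▸ ncard_sixProductLines⟩
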